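/- Let a ≥ 1/2, b ≥ 1, and let x ∈ ℝ⁶ satisfy x1 ≥ 1, 1 ≤ x3, x5 ≤ b and 1/2 ≤ x2, x4, x6 ≤ a. Then φ(x) ≤ max{ φ(x1,a,b,a,b,1/2), φ(x1,a,b,a,1,1/2), φ(x1,a,b,1/2,b,1/2), φ(x1,a,b,1/2,1,1/2) }, where φ(x) = (x3·x4 + x2·x5 + x1·x2·x3 + x1·x4·x5 + x6 − x1²·x6) / (√(x1² + x3² + x5² + 2·x1·x3·x5 − 1) · √(x2² + x4² + 2·x1·x2·x4)). -/
import Mathlib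

/-- The cosine of the dihedral angle at the hyper-ideal edge e23 of a decorated
3-1 type hyperbolic tetrahedron. -/
noncomputable def phi (x1 x2 x3 x4 x5 x6 : ℝ) : ℝ :=
  (x3 * x4 + x2 * x5 + x1 * x2 * x3 + x1 * x4 * x5 + x6 - x1 ^ 2 * x6) /
    (Real.sqrt (x1 ^ 2 + x3 ^ 2 + x5 ^ 2 + 2 * x1 * x3 * x5 - 1) *
      Real.sqrt (x2 ^ 2 + x4 ^ 2 + 2 * x1 * x2 * x4))

section Core

lemma mul_sqrt_le (a b Du Dv : ℝ) (ha : 0 ≤ a) (hb : 0 ≤ b)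
    (h : a^2*Dv ≤ b^2*Du) : a * Real.sqrt Dv ≤ b * Real.sqrt Du := by
  have h1 : a * Real.sqrt Dv = Real.sqrt (a^2*Dv) := by
    rw [Real.sqrt_mul (sq_nonneg a), Real.sqrt_sq ha]
  have h2 : b * Real.sqrt Du = Real.sqrt (b^2*Du) := by
    rw [Real.sqrt_mul (sq_nonneg b), Real.sqrt_sq hb]
  rw [h1, h2]; exact Real.sqrt_le_sqrt h

lemma helperA (Au Av Du Dv : ℝ) (hv : 0 ≤ Av) (hsq : Au^2*Dv ≤ Av^2*Du)
    (hDu : 0 < Du) (hDv : 0 < Dv) : Au/Real.sqrt Du ≤ Av/Real.sqrt Dv := by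
  rcases le_or_gt Au 0 with hu | hu
  · exact le_trans (div_nonpos_of_nonpos_of_nonneg hu (Real.sqrt_nonneg _))
      (div_nonneg hv (Real.sqrt_nonneg _))
  · rw [div_le_div_iff₀ (Real.sqrt_pos.2 hDu) (Real.sqrt_pos.2 hDv)]
    exact mul_sqrt_le Au Av Du Dv hu.le hv hsq

lemma helperB (Au Av Du Dv : ℝ) (hu : Au ≤ 0) (hsq : Av^2*Du ≤ Au^2*Dv)
    (hDu : 0 < Du) (hDv : 0 < Dv) : Au/Real.sqrt Du ≤ Av/Real.sqrt Dv := by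
  rcases le_or_gt 0 Av with hv | hv
  · exact le_trans (div_nonpos_of_nonpos_of_nonneg hu (Real.sqrt_nonneg _))
      (div_nonneg hv (Real.sqrt_nonneg _))
  · rw [div_le_div_iff₀ (Real.sqrt_pos.2 hDu) (Real.sqrt_pos.2 hDv)]
    have key : (-Av) * Real.sqrt Du ≤ (-Au) * Real.sqrt Dv := by
      apply mul_sqrt_le (-Av) (-Au) Dv Du (by linarith) (by linarith)
      nlinarith [hsq]
    nlinarith [key]

lemma step_mono (α β p q u v : ℝ) (hα : 0 < α) (huv : u ≤ v)
    (hDu : 0 < u^2+2*p*u+q) (hDv : 0 < v^2+2*p*v+q)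
    (hm : 0 ≤ α*p-β) (hL : 0 ≤ (α*p-β)*u + (α*q-β*p)) :
    (α*u+β)/Real.sqrt (u^2+2*p*u+q) ≤ (α*v+β)/Real.sqrt (v^2+2*p*v+q) := by
  have key : (α*v+β)^2*(u^2+2*p*u+q) - (α*u+β)^2*(v^2+2*p*v+q)
      = (v-u)*(((α*p-β)*u+(α*q-β*p))*((α*u+β)+(α*v+β)) + (α*p-β)*(v-u)*(α*u+β)) := by
    ring
  have hvu : 0 ≤ v - u := by linarith
  rcases le_or_gt (α*u+β) 0 with hu | hu
  · rcases le_or_gt (α*v+β) 0 with hv | hv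
    · apply helperB _ _ _ _ hu _ hDu hDv
      have t1 : ((α*p-β)*u+(α*q-β*p))*((α*u+β)+(α*v+β)) ≤ 0 :=
        mul_nonpos_of_nonneg_of_nonpos hL (by linarith)
      have t2 : (α*p-β)*(v-u)*(α*u+β) ≤ 0 :=
        mul_nonpos_of_nonneg_of_nonpos (mul_nonneg hm hvu) hu
      nlinarith [mul_nonneg hvu (neg_nonneg.2 (add_nonpos t1 t2))]
    · exact le_trans (div_nonpos_of_nonpos_of_nonneg hu (Real.sqrt_nonneg _))
        (div_nonneg hv.le (Real.sqrt_nonneg _))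
  · have hv : 0 < α*v+β := by nlinarith
    apply helperA _ _ _ _ hv.le _ hDu hDv
    have t1 : 0 ≤ ((α*p-β)*u+(α*q-β*p))*((α*u+β)+(α*v+β)) :=
      mul_nonneg hL (by linarith)
    have t2 : 0 ≤ (α*p-β)*(v-u)*(α*u+β) :=
      mul_nonneg (mul_nonneg hm hvu) hu.le
    nlinarith [mul_nonneg hvu (add_nonneg t1 t2)]

lemma step_anti (α β p q u v : ℝ) (hα : 0 < α) (huv : u ≤ v) (hup : 0 < u + p)
    (hDu : 0 < u^2+2*p*u+q) (hDv : 0 < v^2+2*p*v+q)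
    (hm : 0 ≤ α*p-β) (hL : (α*p-β)*v + (α*q-β*p) ≤ 0) :
    (α*v+β)/Real.sqrt (v^2+2*p*v+q) ≤ (α*u+β)/Real.sqrt (u^2+2*p*u+q) := by
  have key : (α*v+β)^2*(u^2+2*p*u+q) - (α*u+β)^2*(v^2+2*p*v+q)
      = (v-u)*(((α*p-β)*v+(α*q-β*p))*((α*u+β)+(α*v+β)) - (α*p-β)*(v-u)*(α*v+β)) := by
    ring
  have hvu : 0 ≤ v - u := by linarith
  have hLu : (α*p-β)*u + (α*q-β*p) ≤ 0 := by nlinarith [mul_nonneg hm hvu]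
  rcases le_or_gt (α*v+β) 0 with hv | hv
  · rcases le_or_gt 0 (α*u+β) with hu | hu
    · exact le_trans (div_nonpos_of_nonpos_of_nonneg hv (Real.sqrt_nonneg _))
        (div_nonneg hu (Real.sqrt_nonneg _))
    · apply helperB _ _ _ _ hv _ hDv hDu
      have t1 : 0 ≤ ((α*p-β)*v+(α*q-β*p))*((α*u+β)+(α*v+β)) := by
        nlinarith [mul_nonneg (neg_nonneg.2 hL) (by linarith : (0:ℝ) ≤ -((α*u+β)+(α*v+β)))]
      have t2 : (α*p-β)*(v-u)*(α*v+β) ≤ 0 :=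
        mul_nonpos_of_nonneg_of_nonpos (mul_nonneg hm hvu) hv
      nlinarith [mul_nonneg hvu (by linarith : (0:ℝ) ≤ ((α*p-β)*v+(α*q-β*p))*((α*u+β)+(α*v+β)) - (α*p-β)*(v-u)*(α*v+β))]
  · have hu : 0 < α*u+β := by
      by_contra hcon
      push_neg at hcon
      have idu : α*(u^2+2*p*u+q) - (α*u+β)*(u+p) = (α*p-β)*u + (α*q-β*p) := by ring
      nlinarith [mul_pos hα hDu, mul_nonpos_of_nonpos_of_nonneg hcon hup.le]
    apply helperA _ _ _ _ hu.le _ hDv hDu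
    have t1 : ((α*p-β)*v+(α*q-β*p))*((α*u+β)+(α*v+β)) ≤ 0 :=
      mul_nonpos_of_nonpos_of_nonneg hL (by linarith)
    have t2 : 0 ≤ (α*p-β)*(v-u)*(α*v+β) :=
      mul_nonneg (mul_nonneg hm hvu) hv.le
    nlinarith [mul_nonpos_of_nonneg_of_nonpos hvu (by linarith : ((α*p-β)*v+(α*q-β*p))*((α*u+β)+(α*v+β)) - (α*p-β)*(v-u)*(α*v+β) ≤ 0)]

lemma quasi (α β p q lo t hi : ℝ) (hα : 0 < α) (hm : 0 ≤ α*p-β)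
    (hlo : lo ≤ t) (hhi : t ≤ hi) (hp : 0 < lo + p)
    (hDlo : 0 < lo^2+2*p*lo+q) (hDt : 0 < t^2+2*p*t+q) (hDhi : 0 < hi^2+2*p*hi+q) :
    (α*t+β)/Real.sqrt (t^2+2*p*t+q) ≤
      max ((α*lo+β)/Real.sqrt (lo^2+2*p*lo+q)) ((α*hi+β)/Real.sqrt (hi^2+2*p*hi+q)) := by
  rcases le_or_gt ((α*p-β)*t + (α*q-β*p)) 0 with h | h
  · exact le_max_of_le_left (step_anti α β p q lo t hα hlo hp hDlo hDt hm h)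
  · exact le_max_of_le_right (step_mono α β p q t hi hα hhi hDt hDhi hm h.le)

end Core

section Phi

lemma D1pos (x1 u v : ℝ) (h1 : 1 ≤ x1) (hu : 1 ≤ u) (hv : 1 ≤ v) :
    0 < x1^2+u^2+v^2+2*x1*u*v-1 := by
  nlinarith [mul_nonneg (mul_nonneg (by linarith : (0:ℝ) ≤ x1) (by linarith : (0:ℝ) ≤ u)) (by linarith : (0:ℝ) ≤ v)]

lemma D2pos (x1 u v : ℝ) (h1 : 0 ≤ x1) (hu : 0 < u) (hv : 0 < v) :
    0 < u^2+v^2+2*x1*u*v := by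
  nlinarith [mul_nonneg h1 (mul_pos hu hv).le, mul_pos hu hv]

lemma phi_as_x5 (x1 x2 x3 x4 t x6 : ℝ) :
    phi x1 x2 x3 x4 t x6 =
      ((x2+x1*x4)*t + (x3*x4+x1*x2*x3+x6-x1^2*x6)) /
        Real.sqrt (t^2+2*(x1*x3)*t+(x1^2+x3^2-1)) *
        (Real.sqrt (x2^2+x4^2+2*x1*x2*x4))⁻¹ := by
  rw [phi, show x1^2+x3^2+t^2+2*x1*x3*t-1 = t^2+2*(x1*x3)*t+(x1^2+x3^2-1) by ring]
  ring

lemma phi_as_x4 (x1 x2 x3 t x5 x6 : ℝ) :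
    phi x1 x2 x3 t x5 x6 =
      ((x3+x1*x5)*t + (x2*x5+x1*x2*x3+x6-x1^2*x6)) /
        Real.sqrt (t^2+2*(x1*x2)*t+x2^2) *
        (Real.sqrt (x1^2+x3^2+x5^2+2*x1*x3*x5-1))⁻¹ := by
  rw [phi, show x2^2+t^2+2*x1*x2*t = t^2+2*(x1*x2)*t+x2^2 by ring]
  ring

lemma phi_as_x3 (x1 x2 t x4 x5 x6 : ℝ) :
    phi x1 x2 t x4 x5 x6 =
      ((x4+x1*x2)*t + (x2*x5+x1*x4*x5+x6-x1^2*x6)) /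
        Real.sqrt (t^2+2*(x1*x5)*t+(x1^2+x5^2-1)) *
        (Real.sqrt (x2^2+x4^2+2*x1*x2*x4))⁻¹ := by
  rw [phi, show x1^2+t^2+x5^2+2*x1*t*x5-1 = t^2+2*(x1*x5)*t+(x1^2+x5^2-1) by ring]
  ring

lemma phi_as_x2 (x1 t x3 x4 x5 x6 : ℝ) :
    phi x1 t x3 x4 x5 x6 =
      ((x5+x1*x3)*t + (x3*x4+x1*x4*x5+x6-x1^2*x6)) /
        Real.sqrt (t^2+2*(x1*x4)*t+x4^2) *
        (Real.sqrt (x1^2+x3^2+x5^2+2*x1*x3*x5-1))⁻¹ := by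
  rw [phi, show t^2+x4^2+2*x1*t*x4 = t^2+2*(x1*x4)*t+x4^2 by ring]
  ring

lemma phi_symm (x1 x2 x3 x4 x5 x6 : ℝ) :
    phi x1 x2 x3 x4 x5 x6 = phi x1 x4 x5 x2 x3 x6 := by
  rw [phi, phi, show x1^2+x5^2+x3^2+2*x1*x5*x3-1 = x1^2+x3^2+x5^2+2*x1*x3*x5-1 by ring,
    show x4^2+x2^2+2*x1*x4*x2 = x2^2+x4^2+2*x1*x2*x4 by ring]
  ring

lemma phi_mono_x6 (x1 x2 x3 x4 x5 x6 c : ℝ) (h1 : 1 ≤ x1) (h3 : 1 ≤ x3) (h5 : 1 ≤ x5)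
    (h2 : 0 < x2) (h4 : 0 < x4) (hc : c ≤ x6) :
    phi x1 x2 x3 x4 x5 x6 ≤ phi x1 x2 x3 x4 x5 c := by
  rw [phi, phi]
  have hD : 0 < Real.sqrt (x1^2+x3^2+x5^2+2*x1*x3*x5-1) *
      Real.sqrt (x2^2+x4^2+2*x1*x2*x4) :=
    mul_pos (Real.sqrt_pos.2 (D1pos x1 x3 x5 h1 h3 h5))
      (Real.sqrt_pos.2 (D2pos x1 x2 x4 (by linarith) h2 h4))
  rw [div_le_div_iff_of_pos_right hD]
  nlinarith [mul_nonneg (sub_nonneg.2 hc) (by nlinarith : (0:ℝ) ≤ x1^2-1)]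

lemma phi_swap (x1 x2 u x4 v x6 : ℝ) (h1 : 1 ≤ x1) (h4 : 0 < x4) (h42 : x4 ≤ x2)
    (hu : 1 ≤ u) (huv : u ≤ v) :
    phi x1 x2 u x4 v x6 ≤ phi x1 x2 v x4 u x6 := by
  rw [phi, phi, show x1^2+v^2+u^2+2*x1*v*u-1 = x1^2+u^2+v^2+2*x1*u*v-1 by ring]
  have hD : 0 < Real.sqrt (x1^2+u^2+v^2+2*x1*u*v-1) *
      Real.sqrt (x2^2+x4^2+2*x1*x2*x4) :=
    mul_pos (Real.sqrt_pos.2 (D1pos x1 u v h1 hu (by linarith)))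
      (Real.sqrt_pos.2 (D2pos x1 x2 x4 (by linarith) (by linarith) h4))
  rw [div_le_div_iff_of_pos_right hD]
  nlinarith [mul_nonneg (mul_nonneg (sub_nonneg.2 huv) (sub_nonneg.2 h1))
    (sub_nonneg.2 h42)]

lemma phi_quasi_x5 (x1 x2 x3 x4 x6 t hi : ℝ) (h1 : 1 ≤ x1) (h3 : 1 ≤ x3)
    (h2 : 0 < x2) (h4 : 0 < x4) (h6 : 0 ≤ x6) (hlo : 1 ≤ t) (hhi : t ≤ hi) :
    phi x1 x2 x3 x4 t x6 ≤ max (phi x1 x2 x3 x4 1 x6) (phi x1 x2 x3 x4 hi x6) := by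
  have hhi1 : 1 ≤ hi := hlo.trans hhi
  have h11 : (0:ℝ) ≤ x1^2-1 := by nlinarith
  have hm : 0 ≤ (x2+x1*x4)*(x1*x3) - (x3*x4+x1*x2*x3+x6-x1^2*x6) := by
    nlinarith [mul_nonneg h11 (add_nonneg (mul_nonneg (by linarith : (0:ℝ) ≤ x3) h4.le) h6)]
  have key := quasi (x2+x1*x4) (x3*x4+x1*x2*x3+x6-x1^2*x6) (x1*x3) (x1^2+x3^2-1) 1 t hi
    (by nlinarith) hm hlo hhi (by nlinarith)
    (by nlinarith)
    (by nlinarith [mul_nonneg (mul_nonneg (by linarith : (0:ℝ) ≤ x1) (by linarith : (0:ℝ) ≤ x3)) (by linarith : (0:ℝ) ≤ t)])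
    (by nlinarith [mul_nonneg (mul_nonneg (by linarith : (0:ℝ) ≤ x1) (by linarith : (0:ℝ) ≤ x3)) (by linarith : (0:ℝ) ≤ hi)])
  have hc : (0:ℝ) ≤ (Real.sqrt (x2^2+x4^2+2*x1*x2*x4))⁻¹ := by positivity
  rw [phi_as_x5 x1 x2 x3 x4 t x6, phi_as_x5 x1 x2 x3 x4 1 x6, phi_as_x5 x1 x2 x3 x4 hi x6,
    ← max_mul_of_nonneg _ _ hc]
  exact mul_le_mul_of_nonneg_right key hc

lemma phi_quasi_x3 (x1 x2 x4 x5 x6 t hi : ℝ) (h1 : 1 ≤ x1) (h5 : 1 ≤ x5)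
    (h2 : 0 < x2) (h4 : 0 < x4) (h6 : 0 ≤ x6) (hlo : 1 ≤ t) (hhi : t ≤ hi) :
    phi x1 x2 t x4 x5 x6 ≤ max (phi x1 x2 1 x4 x5 x6) (phi x1 x2 hi x4 x5 x6) := by
  rw [phi_symm x1 x2 t x4 x5 x6, phi_symm x1 x2 1 x4 x5 x6, phi_symm x1 x2 hi x4 x5 x6]
  exact phi_quasi_x5 x1 x4 x5 x2 x6 t hi h1 h5 h4 h2 h6 hlo hhi

lemma phi_quasi_x4 (x1 x2 x3 x5 x6 t hi : ℝ) (h1 : 1 ≤ x1) (h3 : 1 ≤ x3) (h5 : 1 ≤ x5)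
    (h2 : 0 < x2) (h6 : 0 ≤ x6) (hlo : 1/2 ≤ t) (hhi : t ≤ hi) :
    phi x1 x2 x3 t x5 x6 ≤ max (phi x1 x2 x3 (1/2) x5 x6) (phi x1 x2 x3 hi x5 x6) := by
  have h11 : (0:ℝ) ≤ x1^2-1 := by nlinarith
  have hm : 0 ≤ (x3+x1*x5)*(x1*x2) - (x2*x5+x1*x2*x3+x6-x1^2*x6) := by
    nlinarith [mul_nonneg h11 (add_nonneg (mul_nonneg h2.le (by linarith : (0:ℝ) ≤ x5)) h6)]
  have key := quasi (x3+x1*x5) (x2*x5+x1*x2*x3+x6-x1^2*x6) (x1*x2) (x2^2) (1/2) t hi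
    (by nlinarith) hm hlo hhi (by nlinarith [mul_pos (by linarith : (0:ℝ) < x1) h2])
    (by nlinarith [mul_pos (by linarith : (0:ℝ) < x1) h2])
    (by nlinarith [mul_pos (by linarith : (0:ℝ) < x1) h2])
    (by nlinarith [mul_pos (by linarith : (0:ℝ) < x1) h2])
  have hc : (0:ℝ) ≤ (Real.sqrt (x1^2+x3^2+x5^2+2*x1*x3*x5-1))⁻¹ := by positivity
  rw [phi_as_x4 x1 x2 x3 t x5 x6, phi_as_x4 x1 x2 x3 (1/2) x5 x6, phi_as_x4 x1 x2 x3 hi x5 x6,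
    ← max_mul_of_nonneg _ _ hc]
  exact mul_le_mul_of_nonneg_right key hc

lemma phi_quasi_x2 (x1 x3 x4 x5 x6 t hi : ℝ) (h1 : 1 ≤ x1) (h3 : 1 ≤ x3) (h5 : 1 ≤ x5)
    (h4 : 0 < x4) (h6 : 0 ≤ x6) (hlo : 1/2 ≤ t) (hhi : t ≤ hi) :
    phi x1 t x3 x4 x5 x6 ≤ max (phi x1 (1/2) x3 x4 x5 x6) (phi x1 hi x3 x4 x5 x6) := by
  rw [phi_symm x1 t x3 x4 x5 x6, phi_symm x1 (1/2) x3 x4 x5 x6, phi_symm x1 hi x3 x4 x5 x6]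
  exact phi_quasi_x4 x1 x4 x5 x3 x6 t hi h1 h5 h3 h4 h6 hlo hhi

lemma phi_mono_x3 (x1 x2 x4 x6 t v : ℝ) (h1 : 1 ≤ x1) (h2 : 0 < x2) (h4 : 0 < x4)
    (h6 : 0 ≤ x6) (ht : 1 ≤ t) (htv : t ≤ v) :
    phi x1 x2 t x4 1 x6 ≤ phi x1 x2 v x4 1 x6 := by
  have h11 : (0:ℝ) ≤ x1^2-1 := by nlinarith
  have hc : (0:ℝ) ≤ (Real.sqrt (x2^2+x4^2+2*x1*x2*x4))⁻¹ := by positivity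
  rw [phi_as_x3 x1 x2 t x4 1 x6, phi_as_x3 x1 x2 v x4 1 x6]
  apply mul_le_mul_of_nonneg_right _ hc
  apply step_mono (x4+x1*x2) (x2*1+x1*x4*1+x6-x1^2*x6) (x1*1) (x1^2+1^2-1) t v
    (by nlinarith) htv (by nlinarith) (by nlinarith)
  · nlinarith [mul_nonneg h11 (add_nonneg h2.le h6)]
  · nlinarith [mul_nonneg (mul_nonneg h11 (add_nonneg h2.le h6)) (by linarith : (0:ℝ) ≤ t),
      mul_nonneg (mul_nonneg h11 (add_nonneg h2.le h6)) (by linarith : (0:ℝ) ≤ x1)]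

lemma phi_mono_x2 (x1 x3 x5 t v : ℝ) (h1 : 1 ≤ x1) (h3 : 1 ≤ x3) (h5 : 1 ≤ x5)
    (h53 : x5 ≤ x3 + 1) (ht : 1/2 ≤ t) (htv : t ≤ v) :
    phi x1 t x3 (1/2) x5 (1/2) ≤ phi x1 v x3 (1/2) x5 (1/2) := by
  have h11 : (0:ℝ) ≤ x1^2-1 := by nlinarith
  have hc : (0:ℝ) ≤ (Real.sqrt (x1^2+x3^2+x5^2+2*x1*x3*x5-1))⁻¹ := by positivity
  rw [phi_as_x2 x1 t x3 (1/2) x5 (1/2), phi_as_x2 x1 v x3 (1/2) x5 (1/2)]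
  apply mul_le_mul_of_nonneg_right _ hc
  apply step_mono (x5+x1*x3) (x3*(1/2)+x1*(1/2)*x5+1/2-x1^2*(1/2)) (x1*(1/2)) ((1/2)^2) t v
    (by nlinarith) htv (by nlinarith) (by nlinarith)
  · nlinarith [mul_nonneg h11 (by linarith : (0:ℝ) ≤ x3+1)]
  · have hinner : 0 ≤ (x3+1)*t/2 + (x1-x5)/4 := by nlinarith
    nlinarith [mul_nonneg h11 hinner]

end Phi

/-- the four-point upper bound for φ. -/
theorem stmt_11 (a b x1 x2 x3 x4 x5 x6 : ℝ) (ha : 1/2 ≤ a) (hb : 1 ≤ b)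
    (h1 : 1 ≤ x1)
    (h3 : 1 ≤ x3 ∧ x3 ≤ b) (h5 : 1 ≤ x5 ∧ x5 ≤ b)
    (h2 : 1/2 ≤ x2 ∧ x2 ≤ a) (h4 : 1/2 ≤ x4 ∧ x4 ≤ a) (h6 : 1/2 ≤ x6 ∧ x6 ≤ a) :
    phi x1 x2 x3 x4 x5 x6 ≤
      max (max (phi x1 a b a b (1/2)) (phi x1 a b a 1 (1/2)))
          (max (phi x1 a b (1/2) b (1/2)) (phi x1 a b (1/2) 1 (1/2))) := by
  obtain ⟨h3l, h3r⟩ := h3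
  obtain ⟨h5l, h5r⟩ := h5
  obtain ⟨h2l, h2r⟩ := h2
  obtain ⟨h4l, h4r⟩ := h4
  set M := max (max (phi x1 a b a b (1/2)) (phi x1 a b a 1 (1/2)))
      (max (phi x1 a b (1/2) b (1/2)) (phi x1 a b (1/2) 1 (1/2))) with hM
  have h2p : (0:ℝ) < x2 := by linarith
  have h4p : (0:ℝ) < x4 := by linarith
  have hap : (0:ℝ) < a := by linarith
  have hT1 : phi x1 a b a b (1/2) ≤ M := le_max_of_le_left (le_max_left _ _)
  have hT2 : phi x1 a b a 1 (1/2) ≤ M := le_max_of_le_left (le_max_right _ _)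
  have hT3 : phi x1 a b (1/2) b (1/2) ≤ M := le_max_of_le_right (le_max_left _ _)
  have hT4 : phi x1 a b (1/2) 1 (1/2) ≤ M := le_max_of_le_right (le_max_right _ _)
  -- Shape I : points of the form  phi x1 y2 b y4 1 (1/2)
  have shapeI : ∀ y2 y4 : ℝ, 1/2 ≤ y2 → y2 ≤ a → 1/2 ≤ y4 → y4 ≤ a →
      phi x1 y2 b y4 1 (1/2) ≤ M := by
    intro y2 y4 hy2l hy2r hy4l hy4r
    have hy2p : (0:ℝ) < y2 := by linarith
    have q4 := phi_quasi_x4 x1 y2 b 1 (1/2) y4 a h1 hb le_rfl hy2p (by norm_num) hy4l hy4r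
    refine q4.trans (max_le ?_ ?_)
    · -- phi x1 y2 b (1/2) 1 (1/2) ≤ T4
      exact (phi_mono_x2 x1 b 1 y2 a h1 hb le_rfl (by linarith) hy2l hy2r).trans hT4
    · -- phi x1 y2 b a 1 (1/2)
      have q2 := phi_quasi_x2 x1 b a 1 (1/2) y2 a h1 hb le_rfl hap (by norm_num) hy2l hy2r
      refine q2.trans (max_le ?_ hT2)
      -- phi x1 (1/2) b a 1 (1/2) = phi x1 a 1 (1/2) b (1/2) ≤ T4
      rw [phi_symm x1 (1/2) b a 1 (1/2)]
      exact (phi_swap x1 a 1 (1/2) b (1/2) h1 (by norm_num) (by linarith) le_rfl hb).trans hT4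
  -- Shape II : points of the form  phi x1 y2 b y4 b (1/2)
  have shapeII : ∀ y2 y4 : ℝ, 1/2 ≤ y2 → y2 ≤ a → 1/2 ≤ y4 → y4 ≤ a →
      phi x1 y2 b y4 b (1/2) ≤ M := by
    intro y2 y4 hy2l hy2r hy4l hy4r
    have hy2p : (0:ℝ) < y2 := by linarith
    have q4 := phi_quasi_x4 x1 y2 b b (1/2) y4 a h1 hb hb hy2p (by norm_num) hy4l hy4r
    refine q4.trans (max_le ?_ ?_)
    · exact (phi_mono_x2 x1 b b y2 a h1 hb hb (by linarith) hy2l hy2r).trans hT3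
    · have q2 := phi_quasi_x2 x1 b a b (1/2) y2 a h1 hb hb hap (by norm_num) hy2l hy2r
      refine q2.trans (max_le ?_ hT1)
      rw [phi_symm x1 (1/2) b a b (1/2)]
      exact hT3
  -- main chain
  have s0 : phi x1 x2 x3 x4 x5 x6 ≤ phi x1 x2 x3 x4 x5 (1/2) :=
    phi_mono_x6 x1 x2 x3 x4 x5 x6 (1/2) h1 h3l h5l h2p h4p h6.1
  refine s0.trans ?_
  have sA := phi_quasi_x5 x1 x2 x3 x4 (1/2) x5 b h1 h3l h2p h4p (by norm_num) h5l h5r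
  refine sA.trans (max_le ?_ ?_)
  · -- x5 = 1 branch
    have m3 := phi_mono_x3 x1 x2 x4 (1/2) x3 b h1 h2p h4p (by norm_num) h3l h3r
    exact m3.trans (shapeI x2 x4 h2l h2r h4l h4r)
  · -- x5 = b branch
    have q3 := phi_quasi_x3 x1 x2 x4 b (1/2) x3 b h1 hb h2p h4p (by norm_num) h3l h3r
    refine q3.trans (max_le ?_ (shapeII x2 x4 h2l h2r h4l h4r))
    rw [phi_symm x1 x2 1 x4 b (1/2)]
    exact shapeI x4 x2 h4l h4r h2l h2r
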